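/- arXiv:2211.01127 — 5 statements merged into one kernel-verified Lean document; each statement's English description precedes it below -/
import Mathlib

section
/- Let A be a real symmetric positive semidefinite n×n matrix, M a real symmetric n×n matrix with 0 ⪯ M ⪯ I, and t > 0. If a vector e satisfies (I − M)M e + t M A M e = 0, then (I − M)M e = 0 and M A M e = 0. -/
open Matrix

theorem stmt_1 {n : ℕ} (A M : Matrix (Fin n) (Fin n) ℝ)
    (hA : A.PosSemidef) (hMsymm : M.IsSymm)
    (hM : M.PosSemidef) (hIM : (1 - M).PosSemidef)
    (t : ℝ) (ht : 0 < t) (e : Fin n → ℝ)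
    (h : ((1 - M) * M) *ᵥ e + t • ((M * A * M) *ᵥ e) = 0) :
    ((1 - M) * M) *ᵥ e = 0 ∧ (M * A * M) *ᵥ e = 0 := by
  -- the matrix (1-M)*M is PSD: it equals S*(1-M)*S with S = sqrt M
  open scoped MatrixOrder in
  have hS : CFC.sqrt M * CFC.sqrt M = M := CFC.sqrt_mul_sqrt_self M hM.nonneg
  open scoped MatrixOrder in
  have hSherm : (CFC.sqrt M).IsHermitian := (CFC.sqrt_nonneg M).posSemidef.isHermitian
  have hPSD : ((1 - M) * M).PosSemidef := by
    obtain ⟨S, hSh, hS2⟩ : ∃ S : Matrix (Fin n) (Fin n) ℝ, S.IsHermitian ∧ S * S = M :=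
      ⟨_, hSherm, hS⟩
    subst hS2
    have hkey : (1 - S * S) * (S * S) = S * (1 - S * S) * Sᴴ := by
      rw [hSh.eq]; noncomm_ring
    rw [hkey]
    exact hIM.mul_mul_conjTranspose_same _
  -- nonnegativity of quadratic forms
  have q1 : 0 ≤ e ⬝ᵥ (((1 - M) * M) *ᵥ e) := by
    simpa using hPSD.dotProduct_mulVec_nonneg e
  have hMAM : e ⬝ᵥ ((M * A * M) *ᵥ e) = (M *ᵥ e) ⬝ᵥ (A *ᵥ (M *ᵥ e)) := by
    rw [← mulVec_mulVec, ← mulVec_mulVec, dotProduct_mulVec, ← mulVec_transpose, hMsymm.eq]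
  have q2 : 0 ≤ e ⬝ᵥ ((M * A * M) *ᵥ e) := by
    rw [hMAM]; simpa using hA.dotProduct_mulVec_nonneg (M *ᵥ e)
  -- sum is zero
  have hsum : e ⬝ᵥ (((1 - M) * M) *ᵥ e) + t * (e ⬝ᵥ ((M * A * M) *ᵥ e)) = 0 := by
    have := congrArg (fun v => e ⬝ᵥ v) h
    simpa [dotProduct_add, dotProduct_smul, smul_eq_mul] using this
  have hq2 : e ⬝ᵥ ((M * A * M) *ᵥ e) = 0 := by
    nlinarith
  have hAx : A *ᵥ (M *ᵥ e) = 0 := by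
    have := (hA.dotProduct_mulVec_zero_iff (M *ᵥ e)).mp
    rw [hMAM] at hq2
    simpa using this (by simpa using hq2)
  have h2 : (M * A * M) *ᵥ e = 0 := by
    rw [← mulVec_mulVec, ← mulVec_mulVec, hAx, mulVec_zero]
  refine ⟨?_, h2⟩
  have := h
  rw [h2, smul_zero, add_zero] at this
  exact this
end

section
/- Let H be a real symmetric positive semidefinite n×n matrix, M a real symmetric n×n matrix with 0 ⪯ M ⪯ I, and 0 < t. Suppose that for every nonzero d in Ker(I − M) one has dᵀ H d > 0. Then the matrix I − M(I − tH) is nonsingular. -/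
open Matrix

theorem stmt_2 {n : ℕ} (H M : Matrix (Fin n) (Fin n) ℝ)
    (hH : H.PosSemidef) (hMsymm : M.IsSymm)
    (hM : M.PosSemidef) (hIM : (1 - M).PosSemidef)
    (t : ℝ) (ht : 0 < t)
    (hker : ∀ d : Fin n → ℝ, d ≠ 0 → (1 - M) *ᵥ d = 0 → 0 < d ⬝ᵥ (H *ᵥ d)) :
    IsUnit (1 - M * (1 - t • H)) := by
  rw [Matrix.isUnit_iff_isUnit_det, isUnit_iff_ne_zero]
  intro hdet
  obtain ⟨d, hd0, hd⟩ := Matrix.exists_mulVec_eq_zero_iff.mpr hdet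
  set u : Fin n → ℝ := d - t • (H *ᵥ d) with hu
  have hMu : M *ᵥ u = d := by
    have h : (1 - M * (1 - t • H)) *ᵥ d = d - M *ᵥ u := by
      simp [hu, sub_mulVec, Matrix.mul_sub, Matrix.mul_smul,
        Matrix.mulVec_sub, Matrix.mulVec_smul, Matrix.smul_mulVec, ← Matrix.mulVec_mulVec]
    rw [h] at hd
    linear_combination (norm := module) -hd
  open scoped MatrixOrder in
  set S := CFC.sqrt M with hS
  have hSH : Sᴴ = S := by open scoped MatrixOrder in exact (CFC.sqrt_nonneg M).posSemidef.isHermitian.eq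
  have hSS : S * S = M := by open scoped MatrixOrder in exact CFC.sqrt_mul_sqrt_self M hM.nonneg
  have hkey : (M - M * M).PosSemidef := by
    have h1 : (S * (1 - M) * Sᴴ).PosSemidef := hIM.mul_mul_conjTranspose_same S
    have heq : S * (1 - M) * Sᴴ = M - M * M := by
      rw [hSH, Matrix.mul_sub, Matrix.mul_one, Matrix.sub_mul, hSS, ← hSS]
      simp only [mul_assoc]
    rwa [heq] at h1
  have h2 : 0 ≤ u ⬝ᵥ ((M - M * M) *ᵥ u) := by
    have := (posSemidef_iff_dotProduct_mulVec.mp hkey).2 u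
    simpa [star_trivial] using this
  have hsym : ∀ x y : Fin n → ℝ, x ⬝ᵥ (M *ᵥ y) = (M *ᵥ x) ⬝ᵥ y := by
    intro x y
    rw [Matrix.dotProduct_mulVec, ← Matrix.mulVec_transpose, hMsymm.eq]
  have h3 : u ⬝ᵥ ((M - M * M) *ᵥ u) = - (t * (d ⬝ᵥ (H *ᵥ d))) := by
    have hMM : (M * M) *ᵥ u = M *ᵥ d := by
      rw [← Matrix.mulVec_mulVec, hMu]
    rw [sub_mulVec, dotProduct_sub, hMM, hMu, hsym u d, hMu]
    rw [hu]
    simp [dotProduct_comm (H *ᵥ d) d, sub_dotProduct, smul_dotProduct]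
  have h4 : d ⬝ᵥ (H *ᵥ d) = 0 := by
    have hle : t * (d ⬝ᵥ (H *ᵥ d)) ≤ 0 := by linarith [h2, h3.symm ▸ h2]
    have hge : 0 ≤ d ⬝ᵥ (H *ᵥ d) := by
      have := (posSemidef_iff_dotProduct_mulVec.mp hH).2 d; simpa [star_trivial] using this
    nlinarith
  have hHd : H *ᵥ d = 0 := by
    have := (hH.dotProduct_mulVec_zero_iff d).mp (by simpa [star_trivial] using h4)
    exact this
  have hud : u = d := by simp [hu, hHd]
  have hker0 : (1 - M) *ᵥ d = 0 := by
    rw [sub_mulVec, Matrix.one_mulVec, ← hud, hMu, hud, sub_self]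
  have := hker d hd0 hker0
  rw [h4] at this
  exact lt_irrefl 0 this
end

section
/- Let D and M be real symmetric n×n matrices with 0 ≺ D ⪯ I and 0 ⪯ M ⪯ I. If (I − D)d > 0 holds in the sense that dᵀ(I − D)d > 0 for every nonzero d ∈ Ker(I − M), then the matrix M − D(2M − I) is nonsingular. -/
open Matrix

lemma symm_dot_aux {n : ℕ} {A : Matrix (Fin n) (Fin n) ℝ} (hA : A.IsSymm)
    (u v : Fin n → ℝ) : u ⬝ᵥ (A *ᵥ v) = v ⬝ᵥ (A *ᵥ u) := by
  rw [dotProduct_mulVec, ← mulVec_transpose, hA.eq, dotProduct_comm]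

theorem stmt_4 {n : ℕ} (D M : Matrix (Fin n) (Fin n) ℝ)
    (hD : D.PosDef) (hID : (1 - D).PosSemidef)
    (hMsymm : M.IsSymm) (hM : M.PosSemidef) (hIM : (1 - M).PosSemidef)
    (hker : ∀ d : Fin n → ℝ, d ≠ 0 → M *ᵥ d = d → 0 < d ⬝ᵥ ((1 - D) *ᵥ d)) :
    IsUnit (M - D * ((2 : ℝ) • M - 1)) := by
  set A : Matrix (Fin n) (Fin n) ℝ := M - D * ((2 : ℝ) • M - 1) with hA
  rw [Matrix.isUnit_iff_isUnit_det, isUnit_iff_ne_zero]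
  intro hdet
  obtain ⟨d, hd0, hAd⟩ := (Matrix.exists_mulVec_eq_zero_iff).mpr hdet
  set x : Fin n → ℝ := M *ᵥ d with hx
  set y : Fin n → ℝ := (1 - M) *ᵥ d with hy
  have hxy : x + y = d := by
    simp [hx, hy, sub_mulVec, one_mulVec]
  -- A = (1-D)*M + D*(1-M)
  have hAdecomp : A = (1 - D) * M + D * (1 - M) := by
    rw [hA]
    rw [Matrix.sub_mul, Matrix.mul_sub, Matrix.one_mul, Matrix.mul_one,
      Matrix.mul_sub, Matrix.mul_one, Matrix.mul_smul, two_smul]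
    abel
  have hAd' : (1 - D) *ᵥ x + D *ᵥ y = 0 := by
    rw [hx, hy, mulVec_mulVec, mulVec_mulVec, ← add_mulVec, ← hAdecomp]
    exact hAd
  have hstar : ∀ v : Fin n → ℝ, star v = v := fun v => rfl
  have h1 : 0 ≤ x ⬝ᵥ ((1 - D) *ᵥ x) := by simpa [hstar] using hID.dotProduct_mulVec_nonneg x
  have h2 : 0 ≤ y ⬝ᵥ (D *ᵥ y) := by simpa [hstar] using hD.posSemidef.dotProduct_mulVec_nonneg y
  have hDsymm : D.IsSymm := hD.1
  have hMy : M *ᵥ y = x - M *ᵥ x := by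
    rw [hy, mulVec_mulVec, Matrix.mul_sub, Matrix.mul_one, sub_mulVec, ← hx,
      ← mulVec_mulVec, ← hx]
  have hIMx : (1 - M) *ᵥ x = x - M *ᵥ x := by
    rw [sub_mulVec, one_mulVec]
  have hxy_eq : x ⬝ᵥ y = y ⬝ᵥ (M *ᵥ y) + x ⬝ᵥ ((1 - M) *ᵥ x) := by
    have h4 : y ⬝ᵥ (M *ᵥ y) + x ⬝ᵥ ((1 - M) *ᵥ x) = (x + y) ⬝ᵥ (x - M *ᵥ x) := by
      rw [hMy, hIMx, add_dotProduct]; ring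
    rw [h4, hxy]
    have hdx : d ⬝ᵥ (M *ᵥ x) = x ⬝ᵥ x := by
      rw [symm_dot_aux hMsymm, ← hx]
    have h5 : x ⬝ᵥ y = x ⬝ᵥ (d - x) := by
      congr 1
      rw [← hxy]; abel
    rw [h5, dotProduct_sub, dotProduct_sub, hdx, dotProduct_comm]
  have h3 : 0 ≤ x ⬝ᵥ y := by
    have ha : 0 ≤ y ⬝ᵥ (M *ᵥ y) := by simpa [hstar] using hM.dotProduct_mulVec_nonneg y
    have hb : 0 ≤ x ⬝ᵥ ((1 - M) *ᵥ x) := by simpa [hstar] using hIM.dotProduct_mulVec_nonneg x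
    rw [hxy_eq]; linarith
  -- sum identity
  have hsum : x ⬝ᵥ ((1 - D) *ᵥ x) + y ⬝ᵥ (D *ᵥ y) + x ⬝ᵥ y = 0 := by
    have hx0 : x ⬝ᵥ ((1 - D) *ᵥ x + D *ᵥ y) = 0 := by rw [hAd']; simp
    have hy0 : y ⬝ᵥ ((1 - D) *ᵥ x + D *ᵥ y) = 0 := by rw [hAd']; simp
    rw [dotProduct_add] at hx0 hy0
    have hcross1 : x ⬝ᵥ (D *ᵥ y) = y ⬝ᵥ (D *ᵥ x) := symm_dot_aux hDsymm x y
    have hcross2 : y ⬝ᵥ ((1 - D) *ᵥ x) = y ⬝ᵥ x - y ⬝ᵥ (D *ᵥ x) := by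
      rw [sub_mulVec, one_mulVec, dotProduct_sub]
    have hcomm : x ⬝ᵥ y = y ⬝ᵥ x := dotProduct_comm _ _
    rw [hcross2] at hy0
    linarith
  have hy2 : y ⬝ᵥ (D *ᵥ y) = 0 := le_antisymm (by linarith) h2
  have hyzero : y = 0 := by
    by_contra hyne
    have := hD.dotProduct_mulVec_pos hyne
    rw [hstar] at this
    exact absurd hy2 (ne_of_gt this)
  have hMd : M *ᵥ d = d := by
    have h6 := hxy
    rw [hyzero, add_zero] at h6
    rw [← hx]; exact h6
  have hxd : x = d := by rw [hx, hMd]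
  have hpos := hker d hd0 hMd
  have hx1 : x ⬝ᵥ ((1 - D) *ᵥ x) = 0 := by linarith
  rw [hxd] at hx1
  linarith
end

section
/- Let D and M be real symmetric n×n matrices with 0 ≺ D ⪯ I and 0 ⪯ M ⪯ I, and suppose d is a nonzero vector with (M − D(2M − I))d = 0. Set e = (2M − I)d. Then e ≠ 0, M d = D e, e = M e = D e, and in particular e is a nonzero vector in Ker(I − M) with (I − D)e = 0. -/
open Matrix

private lemma aux_sub_sq_posSemidef {n : ℕ} {A : Matrix (Fin n) (Fin n) ℝ}
    (hA : A.PosSemidef) (hIA : ((1 : Matrix (Fin n) (Fin n) ℝ) - A).PosSemidef) :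
    (A - A * A).PosSemidef := by
  obtain ⟨S, hSpsd, hS⟩ : ∃ S : Matrix (Fin n) (Fin n) ℝ, S.PosSemidef ∧ S * S = A :=
    open scoped MatrixOrder in
    ⟨CFC.sqrt A, (CFC.sqrt_nonneg A).posSemidef, CFC.sqrt_mul_sqrt_self A hA.nonneg⟩
  have hHerm : Sᴴ = S := hSpsd.isHermitian
  have h := hIA.mul_mul_conjTranspose_same S
  have hEq : S * (1 - A) * Sᴴ = A - A * A := by
    rw [hHerm, Matrix.mul_sub, Matrix.mul_one, Matrix.sub_mul, hS]
    congr 1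
    conv_lhs => rw [← hS]
    conv_rhs => rw [← hS]
    simp only [Matrix.mul_assoc]
  rwa [hEq] at h

theorem stmt_6 {n : ℕ} (D M : Matrix (Fin n) (Fin n) ℝ)
    (hD : D.PosDef) (hID : (1 - D).PosSemidef)
    (hMsymm : M.IsSymm) (hM : M.PosSemidef) (hIM : (1 - M).PosSemidef)
    (d : Fin n → ℝ) (hd : d ≠ 0)
    (h : (M - D * ((2 : ℝ) • M - 1)) *ᵥ d = 0) :
    (((2 : ℝ) • M - 1) *ᵥ d) ≠ 0 ∧
    M *ᵥ d = D *ᵥ (((2 : ℝ) • M - 1) *ᵥ d) ∧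
    M *ᵥ (((2 : ℝ) • M - 1) *ᵥ d) = ((2 : ℝ) • M - 1) *ᵥ d ∧
    D *ᵥ (((2 : ℝ) • M - 1) *ᵥ d) = ((2 : ℝ) • M - 1) *ᵥ d ∧
    (1 - D) *ᵥ (((2 : ℝ) • M - 1) *ᵥ d) = 0 := by
  set e : Fin n → ℝ := ((2 : ℝ) • M - 1) *ᵥ d with he
  -- key: M d = D e
  have hMd : M *ᵥ d = D *ᵥ e := by
    have h' := h
    rw [Matrix.sub_mulVec, ← Matrix.mulVec_mulVec, sub_eq_zero] at h'
    exact h'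
  -- e = 2 • (D e) - d
  have h3 : e = (2 : ℝ) • (D *ᵥ e) - d := by
    conv_lhs => rw [he]
    rw [Matrix.sub_mulVec, Matrix.smul_mulVec, Matrix.one_mulVec, hMd]
  -- d = 2 • (D e) - e
  have hde : d = (2 : ℝ) • (D *ᵥ e) - e := by
    rw [eq_sub_iff_add_eq] at h3 ⊢
    rw [add_comm]; exact h3
  -- symmetry facts
  have hDsymm : D.IsSymm := hD.posSemidef.isHermitian
  have hDD : (D * D) *ᵥ e = D *ᵥ (D *ᵥ e) := (Matrix.mulVec_mulVec _ _ _).symm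
  have hdotD : ∀ v : Fin n → ℝ, e ⬝ᵥ (D *ᵥ v) = (D *ᵥ e) ⬝ᵥ v := by
    intro v
    rw [Matrix.dotProduct_mulVec, ← Matrix.mulVec_transpose, hDsymm.eq]
  set s : ℝ := e ⬝ᵥ (D *ᵥ e) with hs
  set t : ℝ := (D *ᵥ e) ⬝ᵥ (D *ᵥ e) with ht
  -- t ≤ s from psd of D - D²
  have hDpsd2 : (D - D * D).PosSemidef := aux_sub_sq_posSemidef hD.posSemidef hID
  have hts : e ⬝ᵥ ((D - D * D) *ᵥ e) = s - t := by
    rw [Matrix.sub_mulVec, dotProduct_sub, hDD, hdotD (D *ᵥ e), hs, ht]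
  have h1 : 0 ≤ s - t := by
    have := hDpsd2.dotProduct_mulVec_nonneg e
    simpa [hts] using this
  -- s ≤ t from psd of M - M² applied to d
  have hMpsd2 : (M - M * M).PosSemidef := aux_sub_sq_posSemidef hM hIM
  have hdotM : d ⬝ᵥ (M *ᵥ (M *ᵥ d)) = (M *ᵥ d) ⬝ᵥ (M *ᵥ d) := by
    rw [Matrix.dotProduct_mulVec, ← Matrix.mulVec_transpose, hMsymm.eq]
  have hdDe : d ⬝ᵥ (D *ᵥ e) = 2 * t - s := by
    rw [hde, sub_dotProduct, smul_dotProduct, smul_eq_mul, ht, hs]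
  have h2 : 0 ≤ t - s := by
    have hpsd := hMpsd2.dotProduct_mulVec_nonneg d
    have key : d ⬝ᵥ ((M - M * M) *ᵥ d) = t - s := by
      rw [Matrix.sub_mulVec, dotProduct_sub, ← Matrix.mulVec_mulVec, hdotM, hMd, hdDe, ht]
      ring
    simpa [key] using hpsd
  have hst : s - t = 0 := le_antisymm (by linarith) h1
  -- (D - D²) e = 0
  have hker : (D - D * D) *ᵥ e = 0 := by
    refine (hDpsd2.dotProduct_mulVec_zero_iff e).mp ?_
    rw [star_trivial, hts, hst]
  -- D (e - D e) = 0, so e = D e by PosDef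
  have hDe : D *ᵥ e = e := by
    have hD0 : D *ᵥ (e - D *ᵥ e) = 0 := by
      rw [Matrix.mulVec_sub, ← hDD, ← Matrix.sub_mulVec, hker]
    by_contra hne
    have hx : e - D *ᵥ e ≠ 0 := fun hx => hne (sub_eq_zero.mp hx).symm
    have hpos := hD.dotProduct_mulVec_pos hx
    rw [hD0] at hpos
    simp at hpos
  -- d = e
  have hde2 : d = e := by rw [hde, hDe, two_smul]; abel
  have hene : e ≠ 0 := hde2 ▸ hd
  refine ⟨hene, hMd, ?_, hDe, ?_⟩
  · rw [← hde2, hMd, hDe]; exact hde2.symm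
  · rw [Matrix.sub_mulVec, Matrix.one_mulVec, hDe, sub_self]
end

section
/- Let f: ℝⁿ → ℝ be C¹, λ > 0, t > 0, and x* ∈ ℝⁿ a point such that for every index i, x*_i ≠ 0 or |∂f/∂x_i(x*)| ≠ λ (strict complementarity), and such that x*_i ≠ 0 implies sign conditions from stationarity: x* = prox_{tλ‖·‖₁}(x* − t∇f(x*)). Then there exists b > 0 such that the index sets I₁(x) = {i : |x_i − t ∂_i f(x)| > tλ} and I₂(x) = {i : |x_i − t ∂_i f(x)| < tλ} are constant on the closed ball B̄(x*, b) and satisfy I₁(x) ∪ I₂(x) = {1,…,n}. -/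
noncomputable def softThresh (τ y : ℝ) : ℝ := Real.sign y * max (|y| - τ) 0

theorem stmt_11 {n : ℕ} (f : (Fin n → ℝ) → ℝ) (hf : ContDiff ℝ 1 f)
    (lam t : ℝ) (hlam : 0 < lam) (ht : 0 < t) (xs : Fin n → ℝ)
    (hfix : ∀ i, xs i = softThresh (t * lam) (xs i - t * fderiv ℝ f xs (Pi.single i 1)))
    (hSC : ∀ i, xs i ≠ 0 ∨ |fderiv ℝ f xs (Pi.single i 1)| ≠ lam) :
    ∃ b > 0, ∀ x ∈ Metric.closedBall xs b,
      ({i : Fin n | t * lam < |x i - t * fderiv ℝ f x (Pi.single i 1)|}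
        = {i : Fin n | t * lam < |xs i - t * fderiv ℝ f xs (Pi.single i 1)|}) ∧
      ({i : Fin n | |x i - t * fderiv ℝ f x (Pi.single i 1)| < t * lam}
        = {i : Fin n | |xs i - t * fderiv ℝ f xs (Pi.single i 1)| < t * lam}) ∧
      ({i : Fin n | t * lam < |x i - t * fderiv ℝ f x (Pi.single i 1)|} ∪
        {i : Fin n | |x i - t * fderiv ℝ f x (Pi.single i 1)| < t * lam}
        = Set.univ) := by
  set G : (Fin n → ℝ) → Fin n → ℝ :=
    fun x i => x i - t * fderiv ℝ f x (Pi.single i 1) with hGdef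
  have hcont : ∀ i, Continuous fun x => G x i := by
    intro i
    have h1 : Continuous fun x : Fin n → ℝ => fderiv ℝ f x :=
      hf.continuous_fderiv one_ne_zero
    have h2 : Continuous fun x : Fin n → ℝ => fderiv ℝ f x (Pi.single i 1) :=
      h1.clm_apply continuous_const
    exact (continuous_apply i).sub (continuous_const.mul h2)
  have hne : ∀ i, |G xs i| ≠ t * lam := by
    intro i heq
    have hfi := hfix i
    rw [softThresh] at hfi
    have hx0 : xs i = 0 := by
      have : max (|xs i - t * fderiv ℝ f xs (Pi.single i 1)| - t * lam) 0 = 0 := by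
        have : |G xs i| - t * lam = 0 := by rw [heq]; ring
        simpa [hGdef] using le_of_eq this
      rw [this, mul_zero] at hfi
      exact hfi
    have hd : |fderiv ℝ f xs (Pi.single i 1)| = lam := by
      have : |G xs i| = t * |fderiv ℝ f xs (Pi.single i 1)| := by
        simp [hGdef, hx0, abs_mul, abs_of_pos ht]
      rw [this] at heq
      exact mul_left_cancel₀ ht.ne' heq
    rcases hSC i with h | h
    · exact h hx0
    · exact h hd
  -- open neighborhood where everything is close
  set S : Set (Fin n → ℝ) :=
    ⋂ i : Fin n, {x | abs (|G x i| - |G xs i|) < abs (|G xs i| - t * lam)} with hSdef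
  have hSopen : IsOpen S := by
    apply isOpen_iInter_of_finite
    intro i
    have : Continuous fun x => abs (|G x i| - |G xs i|) := ((hcont i).abs.sub continuous_const).abs
    exact isOpen_lt this continuous_const
  have hxsS : xs ∈ S := by
    refine Set.mem_iInter.mpr fun i => ?_
    simp only [Set.mem_setOf_eq, sub_self, abs_zero]
    rw [abs_pos, sub_ne_zero]
    exact hne i
  rcases Metric.isOpen_iff.mp hSopen xs hxsS with ⟨r, hr, hball⟩
  refine ⟨r / 2, by positivity, fun x hx => ?_⟩
  have hxS : x ∈ S := hball (lt_of_le_of_lt (Metric.mem_closedBall.mp hx) (by linarith))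
  have key : ∀ i, (t * lam < |G x i| ↔ t * lam < |G xs i|) ∧
      (|G x i| < t * lam ↔ |G xs i| < t * lam) := by
    intro i
    have h : -(abs (|G xs i| - t * lam)) < |G x i| - |G xs i| ∧ |G x i| - |G xs i| < abs (|G xs i| - t * lam) := abs_lt.mp (Set.mem_iInter.mp hxS i)
    rcases lt_or_gt_of_ne (hne i) with hc | hc
    · rw [abs_of_neg (sub_neg.mpr hc)] at h
      constructor
      · constructor <;> intro h' <;> [linarith; linarith]
      · constructor <;> intro h' <;> [exact hc; linarith]
    · rw [abs_of_pos (sub_pos.mpr hc)] at h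
      constructor
      · constructor <;> intro h' <;> [exact hc; linarith]
      · constructor <;> intro h' <;> [linarith; linarith]
  refine ⟨Set.ext fun i => (key i).1, Set.ext fun i => (key i).2, ?_⟩
  ext i
  simp only [Set.mem_union, Set.mem_setOf_eq, Set.mem_univ, iff_true]
  rcases lt_or_gt_of_ne (hne i) with hc | hc
  · exact Or.inr ((key i).2.mpr hc)
  · exact Or.inl ((key i).1.mpr hc)
end
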